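/- Let H be the group of order 63 with underlying set ZMod 7 × ZMod 9 and multiplication (a,c) * (a',c') = (a + 2^c * a', c + c') (the semidirect product ℤ/7 ⋊ ℤ/9 in which the generator 1 of ℤ/9 acts on ℤ/7 by multiplication by 2), and let G = ZMod 2 × H (the group C2 × (C7 : C9) of order 126). There exists a family ℬ of 6-element finite subsets of G that is invariant under left translation and such that every pair of distinct elements of G is contained in exactly one member of ℬ. In other words, there exists a Steiner system S(2,6,126) (unital of order 5) on which C2 × (C7 : C9) acts point-transitively and effectively. -/

import Mathlib

/-- Multiplication of the semidirect product `H = ℤ/7 ⋊ ℤ/9` with underlying set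
`ZMod 7 × ZMod 9`, where the generator `1` of `ℤ/9` acts on `ℤ/7` by multiplication
by `2`: `(a,c) * (a',c') = (a + 2^c * a', c + c')`. -/
def mulH13 (p q : ZMod 7 × ZMod 9) : ZMod 7 × ZMod 9 :=
  (p.1 + 2 ^ p.2.val * q.1, p.2 + q.2)

/-- The group `C2 × (C7 : C9)` of order 126. -/
abbrev G13 := ZMod 2 × (ZMod 7 × ZMod 9)

/-- Left translation by `g` in `C2 × (C7 : C9)`. -/
def leftTr13 (g x : G13) : G13 := (g.1 + x.1, mulH13 g.2 x.2)

/-!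
The blocks are the `21` translates of the central subgroup `K ≅ C6` together with the `4 · 126`
translates of four base blocks forming a relative difference family for `K`. The family of all
translates is translation invariant, so a pair `{p, q}` may be moved to `{1, p⁻¹ * q}`, and the
blocks through `1` are the finitely many `b⁻¹ • D i` with `b ∈ D i`: the Steiner property
becomes a finite check.
-/

open Pointwise

section Development

variable {G ι : Type*} [Group G] [DecidableEq G]

theorem existsUnique_mem_of_smul_invariant {ℬ : Set (Finset G)}
    (hℬ : ∀ g : G, ∀ B ∈ ℬ, g • B ∈ ℬ)
    (h : ∀ d : G, d ≠ 1 → ∃! B, B ∈ ℬ ∧ 1 ∈ B ∧ d ∈ B) {p q : G} (hpq : p ≠ q) :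
    ∃! B, B ∈ ℬ ∧ p ∈ B ∧ q ∈ B := by
  obtain ⟨B, ⟨hB, h1, hd⟩, huniq⟩ := h (p⁻¹ * q) (by rwa [ne_eq, inv_mul_eq_one])
  refine ⟨p • B, ⟨hℬ p B hB, ?_, ?_⟩, ?_⟩
  · simpa using Finset.smul_mem_smul_finset (a := p) h1
  · simpa using Finset.smul_mem_smul_finset (a := p) hd
  · rintro C ⟨hC, hpC, hqC⟩
    rw [← inv_smul_eq_iff]
    refine huniq _ ⟨hℬ _ C hC, ?_, ?_⟩
    · rwa [Finset.mem_inv_smul_finset_iff, smul_eq_mul, mul_one]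
    · rwa [Finset.mem_inv_smul_finset_iff, smul_eq_mul, mul_inv_cancel_left]

variable (D : ι → Finset G)

def development : Set (Finset G) := {B | ∃ i, ∃ g : G, B = g • D i}

theorem smul_mem_development (g : G) {B : Finset G} (hB : B ∈ development D) :
    g • B ∈ development D := by
  obtain ⟨i, h, rfl⟩ := hB
  exact ⟨i, g * h, (mul_smul g h (D i)).symm⟩

theorem card_of_mem_development {k : ℕ} (hD : ∀ i, (D i).card = k) {B : Finset G}
    (hB : B ∈ development D) : B.card = k := by
  obtain ⟨i, g, rfl⟩ := hB
  rw [Finset.card_smul_finset, hD]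

def blocksThroughOne [Fintype ι] : Finset (Finset G) :=
  Finset.univ.biUnion fun i => (D i).image fun b => b⁻¹ • D i

theorem mem_blocksThroughOne [Fintype ι] {B : Finset G} :
    B ∈ blocksThroughOne D ↔ B ∈ development D ∧ 1 ∈ B := by
  simp only [blocksThroughOne, Finset.mem_biUnion, Finset.mem_univ, true_and,
    Finset.mem_image]
  constructor
  · rintro ⟨i, b, hb, rfl⟩
    exact ⟨⟨i, b⁻¹, rfl⟩, by rwa [Finset.mem_inv_smul_finset_iff, smul_eq_mul, mul_one]⟩
  · rintro ⟨⟨i, g, rfl⟩, h1⟩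
    obtain ⟨b, hb, hgb⟩ := Finset.mem_smul_finset.1 h1
    exact ⟨i, b, hb, by rw [mul_eq_one_iff_eq_inv.1 hgb]⟩

theorem existsUnique_mem_development [Fintype ι]
    (hD : ∀ d : G, d ≠ 1 → ((blocksThroughOne D).filter (d ∈ ·)).card = 1) {p q : G}
    (hpq : p ≠ q) : ∃! B, B ∈ development D ∧ p ∈ B ∧ q ∈ B := by
  refine existsUnique_mem_of_smul_invariant (fun g _ => smul_mem_development D g)
    (fun d hd => ?_) hpq
  obtain ⟨B, hB⟩ := Finset.card_eq_one.1 (hD d hd)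
  have key : ∀ C, C ∈ development D ∧ 1 ∈ C ∧ d ∈ C ↔ C = B := fun C => by
    rw [← and_assoc, ← mem_blocksThroughOne, ← Finset.mem_singleton, ← hB,
      Finset.mem_filter]
  exact ⟨B, (key B).2 rfl, fun C hC => (key C).1 hC⟩

end Development

-- `2` has order `3` in `ZMod 7`, which divides `9`.
theorem two_pow_val_add (a b : ZMod 9) : (2 : ZMod 7) ^ (a + b).val = 2 ^ a.val * 2 ^ b.val := by
  rw [ZMod.val_add, ← pow_eq_pow_mod _ (by decide : (2 : ZMod 7) ^ 9 = 1), pow_add]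

theorem leftTr13_leftTr13 (g h x : G13) :
    leftTr13 (leftTr13 g h) x = leftTr13 g (leftTr13 h x) := by
  simp only [leftTr13, mulH13, two_pow_val_add, Prod.mk.injEq]
  exact ⟨add_assoc _ _ _, by ring, add_assoc _ _ _⟩

theorem leftTr13_zero (x : G13) : leftTr13 (0, (0, 0)) x = x := by
  simp [leftTr13, mulH13]

theorem leftTr13_neg (g : G13) :
    leftTr13 (-g.1, (-(2 ^ (-g.2.2).val * g.2.1), -g.2.2)) g = (0, (0, 0)) :=
  Prod.ext (neg_add_cancel _) (Prod.ext (neg_add_cancel _) (neg_add_cancel _))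

/-- `G13` with the group law `leftTr13`; a type synonym, since `G13` already carries the
componentwise ring multiplication. -/
def C2xC7C9 : Type := G13

namespace C2xC7C9

instance : DecidableEq C2xC7C9 := inferInstanceAs (DecidableEq G13)

instance : Fintype C2xC7C9 := inferInstanceAs (Fintype G13)

instance : Mul C2xC7C9 := ⟨leftTr13⟩

instance : One C2xC7C9 := ⟨((0, (0, 0)) : G13)⟩

instance : Inv C2xC7C9 := ⟨fun g : G13 => (-g.1, (-(2 ^ (-g.2.2).val * g.2.1), -g.2.2))⟩

instance : Group C2xC7C9 := Group.ofLeftAxioms leftTr13_leftTr13 leftTr13_zero leftTr13_neg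

/-- `baseBlocks 0` is the centre `K`; the quotients `b⁻¹ * c` within each of the other four
cover every element outside `K` exactly once. -/
def baseBlocks : Fin 5 → Finset C2xC7C9 :=
  (![{(0,(0,0)), (1,(0,0)), (0,(0,3)), (1,(0,3)), (0,(0,6)), (1,(0,6))},
     {(0,(0,0)), (0,(0,2)), (0,(2,8)), (0,(2,0)), (1,(1,1)), (0,(6,3))},
     {(0,(0,0)), (1,(1,2)), (1,(2,6)), (0,(6,7)), (0,(6,2)), (0,(2,2))},
     {(0,(0,0)), (1,(2,5)), (0,(6,1)), (1,(1,8)), (0,(5,5)), (1,(6,8))},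
     {(0,(0,0)), (0,(6,4)), (1,(3,6)), (1,(6,5)), (0,(1,2)), (0,(2,3))}] : Fin 5 → Finset G13)

theorem card_baseBlocks : ∀ i, (baseBlocks i).card = 6 := by decide

set_option maxRecDepth 100000 in
theorem card_filter_blocksThroughOne_baseBlocks :
    ∀ d : C2xC7C9, d ≠ 1 → ((blocksThroughOne baseBlocks).filter (d ∈ ·)).card = 1 := by
  decide

end C2xC7C9

theorem unital_C2xC7C9_exists :
    ∃ ℬ : Set (Finset G13),
      (∀ B ∈ ℬ, B.card = 6) ∧
      (∀ g : G13, ∀ B ∈ ℬ, B.image (leftTr13 g) ∈ ℬ) ∧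
      (∀ p q : G13, p ≠ q → ∃! B, B ∈ ℬ ∧ p ∈ B ∧ q ∈ B) :=
  open C2xC7C9 in
  ⟨(development baseBlocks : Set (Finset C2xC7C9)),
    fun _ => card_of_mem_development baseBlocks card_baseBlocks,
    fun g _ => smul_mem_development baseBlocks (g : C2xC7C9),
    fun _ _ => existsUnique_mem_development baseBlocks card_filter_blocksThroughOne_baseBlocks⟩
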